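/- Let P_{2n+1} be the path on vertices v_1, ..., v_{2n+1} with edges v_i v_{i+1}, viewed as a weighted graph with nonzero edge weights. Then for distinct i, j, the pair (v_i, v_j) is maximally matchable if and only if i + j is odd. Consequently v_i v_j is an edge of P_{2n+1}# if and only if i + j is odd. -/

import Mathlib

open SimpleGraph

/-- `X` is the group inverse of `A`. -/
def IsGroupInverse {n : Type*} [Fintype n] (A X : Matrix n n ℝ) : Prop :=
  A * X * A = A ∧ X * A * X = X ∧ A * X = X * A

/-- A matching of a graph: a set of pairwise non-incident edges. -/
def IsMatching {V : Type*} (G : SimpleGraph V) (M : Finset (Sym2 V)) : Prop :=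
  (↑M : Set (Sym2 V)) ⊆ G.edgeSet ∧
    ∀ e ∈ M, ∀ f ∈ M, e ≠ f → ∀ v : V, ¬(v ∈ e ∧ v ∈ f)

/-- A maximum matching: a matching of maximum cardinality. -/
def IsMaxMatching {V : Type*} (G : SimpleGraph V) (M : Finset (Sym2 V)) : Prop :=
  IsMatching G M ∧ ∀ N : Finset (Sym2 V), IsMatching G N → N.card ≤ M.card

/-- A nonempty list of edges alternately in and out of `M`,
beginning and ending with edges of `M`. -/
def IsAltEdgeList {V : Type*} (M : Set (Sym2 V)) : List (Sym2 V) → Prop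
  | [] => False
  | [e] => e ∈ M
  | e :: f :: rest => e ∈ M ∧ f ∉ M ∧ IsAltEdgeList M rest

/-- A pair of vertices is maximally matchable if they are joined by a path that is
alternating with respect to some maximum matching. -/
def MaxMatchable {V : Type*} (G : SimpleGraph V) (u v : V) : Prop :=
  ∃ (p : G.Walk u v) (M : Finset (Sym2 V)),
    p.IsPath ∧ IsMaxMatching G M ∧ IsAltEdgeList (↑M) p.edges

/-- `G` is a star: some center `c` is adjacent to exactly the other vertices,
and there are no other edges. -/
def IsStar {V : Type*} (G : SimpleGraph V) : Prop :=
  ∃ c : V, ∀ u v : V, G.Adj u v ↔ ((u = c ∧ v ≠ c) ∨ (v = c ∧ u ≠ c))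

/-- The class 𝕋: trees with at least one non-pendant vertex in which every
non-pendant vertex is adjacent to a pendant vertex. -/
def InClassT {V : Type*} [Fintype V] (T : SimpleGraph V) [DecidableRel T.Adj] : Prop :=
  T.IsTree ∧ (∃ v, T.degree v ≠ 1) ∧
    ∀ v, T.degree v ≠ 1 → ∃ u, T.Adj v u ∧ T.degree u = 1

/-- The number of pendant neighbours of `v`. -/
def pendantNbrs {V : Type*} [Fintype V] [DecidableEq V] (T : SimpleGraph V)
    [DecidableRel T.Adj] (v : V) : ℕ :=
  ((T.neighborFinset v).filter fun u => T.degree u = 1).card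

namespace OddPathAux

lemma altOdd {V : Type*} (M : Set (Sym2 V)) :
    ∀ l : List (Sym2 V), IsAltEdgeList M l → Odd l.length
  | [], h => h.elim
  | [e], _ => ⟨0, rfl⟩
  | e :: f :: rest, h => by
      obtain ⟨_, _, h3⟩ := h
      obtain ⟨m, hm⟩ := altOdd M rest h3
      exact ⟨m + 1, by simp [List.length_cons, hm]; omega⟩

lemma altOfGet {V : Type*} (M : Set (Sym2 V)) :
    ∀ l : List (Sym2 V), Odd l.length →
      (∀ k (h : k < l.length), (l.get ⟨k, h⟩ ∈ M ↔ Even k)) → IsAltEdgeList M l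
  | [], h, _ => by simp at h
  | [e], _, hg => (hg 0 (by simp)).mpr Even.zero
  | e :: f :: rest, h, hg => by
      refine ⟨(hg 0 (by simp)).mpr Even.zero,
        fun hf => (by decide : ¬ Even 1) ((hg 1 (by simp)).mp hf),
        altOfGet M rest ?_ ?_⟩
      · simp only [List.length_cons] at h ⊢
        rw [Nat.odd_iff] at h ⊢; omega
      · intro k hk
        have := hg (k + 2) (by simp only [List.length_cons]; omega)
        simpa [Nat.even_add] using this

lemma walk_parity {N : ℕ} {i j : Fin N} (p : (pathGraph N).Walk i j) :
    (p.length + i.val + j.val) % 2 = 0 := by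
  induction p with
  | nil => simp [Nat.add_mod]; omega
  | cons h q ih =>
      rw [pathGraph_adj] at h
      simp only [Walk.length_cons] at *
      omega

lemma exists_walk_up {N : ℕ} : ∀ (d : ℕ) (a b : Fin N), b.val = a.val + d →
    ∃ p : (pathGraph N).Walk a b, p.IsPath ∧ p.length = d ∧
      (∀ v ∈ p.support, a.val ≤ v.val) ∧
      ∀ k (h : k < p.edges.length), ∃ x y : Fin N,
        p.edges.get ⟨k, h⟩ = s(x, y) ∧ x.val = a.val + k ∧ y.val = x.val + 1
  | 0, a, b, hd => by
      have hab : a = b := Fin.ext (by omega)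
      subst hab
      exact ⟨Walk.nil, by simp, by simp, by simp, by simp⟩
  | d + 1, a, b, hd => by
      have hb := b.isLt
      have ha' : a.val + 1 < N := by omega
      set a' : Fin N := ⟨a.val + 1, ha'⟩ with ha'def
      have hadj : (pathGraph N).Adj a a' := by rw [pathGraph_adj]; left; rfl
      obtain ⟨p, hp, hl, hs, he⟩ :=
        exists_walk_up d a' b (show b.val = a.val + 1 + d by omega)
      refine ⟨Walk.cons hadj p, ?_, ?_, ?_, ?_⟩
      · rw [Walk.cons_isPath_iff]
        refine ⟨hp, fun hmem => ?_⟩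
        have h2 : a.val + 1 ≤ a.val := hs a hmem
        omega
      · simp [hl]
      · intro v hv
        rw [Walk.support_cons] at hv
        rcases List.mem_cons.mp hv with hv | hv
        · simp [hv]
        · have h2 : a.val + 1 ≤ v.val := hs v hv
          omega
      · intro k hk
        match k, hk with
        | 0, hk => exact ⟨a, a', rfl, by omega, rfl⟩
        | k + 1, hk =>
            have hk' : k < p.edges.length := by
              have : (k + 1) < (s(a, a') :: p.edges).length := hk
              simpa using this
            obtain ⟨x, y, hxy, hx, hy⟩ := he k hk'
            have hx' : x.val = a.val + 1 + k := hx
            exact ⟨x, y, hxy, by omega, hy⟩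

lemma exists_walk_down {N : ℕ} : ∀ (d : ℕ) (a b : Fin N), a.val = b.val + d →
    ∃ p : (pathGraph N).Walk a b, p.IsPath ∧ p.length = d ∧
      (∀ v ∈ p.support, v.val ≤ a.val) ∧
      ∀ k (h : k < p.edges.length), ∃ x y : Fin N,
        p.edges.get ⟨k, h⟩ = s(x, y) ∧ x.val + k = a.val ∧ x.val = y.val + 1
  | 0, a, b, hd => by
      have hab : a = b := Fin.ext (by omega)
      subst hab
      exact ⟨Walk.nil, by simp, by simp, by simp, by simp⟩
  | d + 1, a, b, hd => by
      have ha := a.isLt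
      have ha' : b.val + d < N := by omega
      set a' : Fin N := ⟨b.val + d, ha'⟩ with ha'def
      have hadj : (pathGraph N).Adj a a' := by
        rw [pathGraph_adj]; right; show b.val + d + 1 = a.val; omega
      obtain ⟨p, hp, hl, hs, he⟩ :=
        exists_walk_down d a' b (show (⟨b.val + d, ha'⟩ : Fin N).val = b.val + d from rfl)
      refine ⟨Walk.cons hadj p, ?_, ?_, ?_, ?_⟩
      · rw [Walk.cons_isPath_iff]
        refine ⟨hp, fun hmem => ?_⟩
        have h2 : a.val ≤ b.val + d := hs a hmem
        omega
      · simp [hl]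
      · intro v hv
        rw [Walk.support_cons] at hv
        rcases List.mem_cons.mp hv with hv | hv
        · simp [hv]
        · have h2 : v.val ≤ b.val + d := hs v hv
          omega
      · intro k hk
        match k, hk with
        | 0, hk => exact ⟨a, a', rfl, by omega, show a.val = b.val + d + 1 by omega⟩
        | k + 1, hk =>
            have hk' : k < p.edges.length := by
              have : (k + 1) < (s(a, a') :: p.edges).length := hk
              simpa using this
            obtain ⟨x, y, hxy, hx, hy⟩ := he k hk'
            have hx' : x.val + k = b.val + d := hx
            exact ⟨x, y, hxy, by omega, hy⟩

def Meven (n : ℕ) : Finset (Sym2 (Fin (2 * n + 1))) :=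
  Finset.univ.image fun m : Fin n =>
    s((⟨2 * m.val, by have := m.isLt; omega⟩ : Fin (2 * n + 1)),
      (⟨2 * m.val + 1, by have := m.isLt; omega⟩ : Fin (2 * n + 1)))

def Modd (n : ℕ) : Finset (Sym2 (Fin (2 * n + 1))) :=
  Finset.univ.image fun m : Fin n =>
    s((⟨2 * m.val + 1, by have := m.isLt; omega⟩ : Fin (2 * n + 1)),
      (⟨2 * m.val + 2, by have := m.isLt; omega⟩ : Fin (2 * n + 1)))

lemma mem_Meven {n : ℕ} (x y : Fin (2 * n + 1)) (h : y.val = x.val + 1) :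
    s(x, y) ∈ Meven n ↔ Even x.val := by
  constructor
  · intro hm
    simp only [Meven, Finset.mem_image, Finset.mem_univ, true_and] at hm
    obtain ⟨m, hm⟩ := hm
    rw [Sym2.eq_iff] at hm
    rcases hm with ⟨h1, h2⟩ | ⟨h1, h2⟩
    · have := congrArg Fin.val h1
      exact ⟨m, by simp at this; omega⟩
    · have h1' := congrArg Fin.val h1
      have h2' := congrArg Fin.val h2
      simp at h1' h2'; omega
  · rintro ⟨m, hm⟩
    have hy := y.isLt
    have hmn : m < n := by omega
    simp only [Meven, Finset.mem_image, Finset.mem_univ, true_and]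
    refine ⟨⟨m, hmn⟩, ?_⟩
    rw [Sym2.eq_iff]; left
    constructor <;> apply Fin.ext <;> simp <;> omega

lemma mem_Modd {n : ℕ} (x y : Fin (2 * n + 1)) (h : y.val = x.val + 1) :
    s(x, y) ∈ Modd n ↔ Odd x.val := by
  constructor
  · intro hm
    simp only [Modd, Finset.mem_image, Finset.mem_univ, true_and] at hm
    obtain ⟨m, hm⟩ := hm
    rw [Sym2.eq_iff] at hm
    rcases hm with ⟨h1, h2⟩ | ⟨h1, h2⟩
    · have := congrArg Fin.val h1
      exact ⟨m, by simp at this; omega⟩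
    · have h1' := congrArg Fin.val h1
      have h2' := congrArg Fin.val h2
      simp at h1' h2'; omega
  · rintro ⟨m, hm⟩
    have hy := y.isLt
    have hmn : m < n := by omega
    simp only [Modd, Finset.mem_image, Finset.mem_univ, true_and]
    refine ⟨⟨m, hmn⟩, ?_⟩
    rw [Sym2.eq_iff]; left
    constructor <;> apply Fin.ext <;> simp <;> omega

lemma matching_card_le {n : ℕ} (N : Finset (Sym2 (Fin (2 * n + 1))))
    (hN : IsMatching (pathGraph (2 * n + 1)) N) : N.card ≤ n := by
  classical
  have key : ∀ e ∈ N, ∃ x y : Fin (2 * n + 1), e = s(x, y) ∧ y.val = x.val + 1 := by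
    intro e he
    have hes : e ∈ (pathGraph (2 * n + 1)).edgeSet := hN.1 he
    induction e using Sym2.ind with
    | _ x y =>
        rw [mem_edgeSet, pathGraph_adj] at hes
        rcases hes with h | h
        · exact ⟨x, y, rfl, h.symm⟩
        · exact ⟨y, x, Sym2.eq_swap.symm, h.symm⟩
  set mv : Sym2 (Fin (2 * n + 1)) → ℕ :=
    Sym2.lift ⟨fun a b => min a.val b.val, fun a b => min_comm _ _⟩ with hmv
  have hmv' : ∀ x y : Fin (2 * n + 1), mv s(x, y) = min x.val y.val := fun _ _ => rfl
  have hmin : ∀ e ∈ N, ∀ x y : Fin (2 * n + 1), e = s(x, y) → y.val = x.val + 1 →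
      mv e = x.val := by
    intro e _ x y hexy hyx
    rw [hexy, hmv']; omega
  have hle := Finset.card_le_card_of_injOn (fun e => mv e / 2)
    (t := Finset.range n)
    (fun e he => by
      obtain ⟨x, y, hexy, hyx⟩ := key e he
      have hy := y.isLt
      have h1 := hmin e he x y hexy hyx
      simp only [Finset.mem_coe, Finset.mem_range]
      show mv e / 2 < n
      omega)
    (by
      intro e he f hf hef
      simp only [Finset.mem_coe] at he hf
      obtain ⟨x, y, hexy, hyx⟩ := key e he
      obtain ⟨x', y', hfxy, hyx'⟩ := key f hf
      have h1 := hmin e he x y hexy hyx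
      have h2 := hmin f hf x' y' hfxy hyx'
      have hef' : x.val / 2 = x'.val / 2 := by
        have : mv e / 2 = mv f / 2 := hef
        omega
      by_contra hne
      have hnocomm := hN.2 e he f hf hne
      have hxx : x.val ≠ x'.val := by
        intro hxeq
        apply hne
        rw [hexy, hfxy]
        have hx : x = x' := Fin.ext hxeq
        have hy : y = y' := Fin.ext (by omega)
        rw [hx, hy]
      have hcase : x'.val = x.val + 1 ∨ x.val = x'.val + 1 := by omega
      rcases hcase with hc | hc
      · exact hnocomm y ⟨by rw [hexy]; exact Sym2.mem_mk_right _ _,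
          by rw [hfxy, Sym2.mem_iff]; left; exact Fin.ext (by omega)⟩
      · exact hnocomm y' ⟨by rw [hexy, Sym2.mem_iff]; left; exact Fin.ext (by omega),
          by rw [hfxy]; exact Sym2.mem_mk_right _ _⟩)
  simpa using hle

lemma card_Meven (n : ℕ) : (Meven n).card = n := by
  rw [Meven, Finset.card_image_of_injective _ ?inj, Finset.card_univ, Fintype.card_fin]
  case inj =>
    intro m m' h
    rw [Sym2.eq_iff] at h
    apply Fin.ext
    simp only [Fin.mk.injEq] at h
    omega

lemma card_Modd (n : ℕ) : (Modd n).card = n := by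
  rw [Modd, Finset.card_image_of_injective _ ?inj, Finset.card_univ, Fintype.card_fin]
  case inj =>
    intro m m' h
    rw [Sym2.eq_iff] at h
    apply Fin.ext
    simp only [Fin.mk.injEq] at h
    omega

lemma isMax_Meven (n : ℕ) : IsMaxMatching (pathGraph (2 * n + 1)) (Meven n) := by
  classical
  refine ⟨⟨?_, ?_⟩, ?_⟩
  · intro e he
    simp only [Finset.mem_coe, Meven, Finset.mem_image, Finset.mem_univ, true_and] at he
    obtain ⟨m, rfl⟩ := he
    exact (mem_edgeSet _).mpr (pathGraph_adj.mpr (Or.inl rfl))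
  · intro e he f hf hne v hv
    simp only [Meven, Finset.mem_image, Finset.mem_univ, true_and] at he hf
    obtain ⟨m, rfl⟩ := he
    obtain ⟨m', rfl⟩ := hf
    obtain ⟨hv1, hv2⟩ := hv
    rw [Sym2.mem_iff] at hv1 hv2
    have hm' : m.val ≠ m'.val := fun h => hne (by rw [Fin.ext h])
    rcases hv1 with rfl | rfl <;> rcases hv2 with h | h <;>
      · have := congrArg Fin.val h; simp only [Fin.val_mk] at this; omega
  · intro N hN
    rw [card_Meven]
    exact matching_card_le N hN

lemma isMax_Modd (n : ℕ) : IsMaxMatching (pathGraph (2 * n + 1)) (Modd n) := by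
  classical
  refine ⟨⟨?_, ?_⟩, ?_⟩
  · intro e he
    simp only [Finset.mem_coe, Modd, Finset.mem_image, Finset.mem_univ, true_and] at he
    obtain ⟨m, rfl⟩ := he
    exact (mem_edgeSet _).mpr (pathGraph_adj.mpr (Or.inl rfl))
  · intro e he f hf hne v hv
    simp only [Modd, Finset.mem_image, Finset.mem_univ, true_and] at he hf
    obtain ⟨m, rfl⟩ := he
    obtain ⟨m', rfl⟩ := hf
    obtain ⟨hv1, hv2⟩ := hv
    rw [Sym2.mem_iff] at hv1 hv2
    have hm' : m.val ≠ m'.val := fun h => hne (by rw [Fin.ext h])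
    rcases hv1 with rfl | rfl <;> rcases hv2 with h | h <;>
      · have := congrArg Fin.val h; simp only [Fin.val_mk] at this; omega
  · intro N hN
    rw [card_Modd]
    exact matching_card_le N hN

lemma maxMatchable_of_odd {n : ℕ} (i j : Fin (2 * n + 1)) (hij : i ≠ j)
    (hodd : Odd (i.val + j.val)) : MaxMatchable (pathGraph (2 * n + 1)) i j := by
  rcases lt_trichotomy i.val j.val with hlt | heq | hgt
  · obtain ⟨p, hp, hl, _, he⟩ := exists_walk_up (j.val - i.val) i j (by omega)
    have hodd' : Odd p.edges.length := by
      rw [Walk.length_edges, hl, Nat.odd_iff]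
      rw [Nat.odd_iff] at hodd
      omega
    by_cases hpar : Even i.val
    · refine ⟨p, Meven n, hp, isMax_Meven n, altOfGet _ _ hodd' fun k h => ?_⟩
      obtain ⟨x, y, hxy, hx, hy⟩ := he k h
      rw [hxy, Finset.mem_coe, mem_Meven x y hy]
      rw [Nat.even_iff] at hpar ⊢
      rw [Nat.even_iff]
      omega
    · refine ⟨p, Modd n, hp, isMax_Modd n, altOfGet _ _ hodd' fun k h => ?_⟩
      obtain ⟨x, y, hxy, hx, hy⟩ := he k h
      rw [hxy, Finset.mem_coe, mem_Modd x y hy]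
      rw [Nat.even_iff] at hpar
      rw [Nat.odd_iff, Nat.even_iff]
      omega
  · exact absurd (Fin.ext heq) hij
  · obtain ⟨p, hp, hl, _, he⟩ := exists_walk_down (i.val - j.val) i j (by omega)
    have hodd' : Odd p.edges.length := by
      rw [Walk.length_edges, hl, Nat.odd_iff]
      rw [Nat.odd_iff] at hodd
      omega
    by_cases hpar : Even i.val
    · refine ⟨p, Modd n, hp, isMax_Modd n, altOfGet _ _ hodd' fun k h => ?_⟩
      obtain ⟨x, y, hxy, hx, hy⟩ := he k h
      rw [hxy, Sym2.eq_swap, Finset.mem_coe, mem_Modd y x hy]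
      rw [Nat.even_iff] at hpar
      rw [Nat.odd_iff, Nat.even_iff]
      omega
    · refine ⟨p, Meven n, hp, isMax_Meven n, altOfGet _ _ hodd' fun k h => ?_⟩
      obtain ⟨x, y, hxy, hx, hy⟩ := he k h
      rw [hxy, Sym2.eq_swap, Finset.mem_coe, mem_Meven y x hy]
      rw [Nat.even_iff] at hpar ⊢
      rw [Nat.even_iff]
      omega

lemma odd_of_maxMatchable {n : ℕ} (i j : Fin (2 * n + 1))
    (h : MaxMatchable (pathGraph (2 * n + 1)) i j) : Odd (i.val + j.val) := by
  obtain ⟨p, M, hp, _, halt⟩ := h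
  have h1 := altOdd _ _ halt
  have h2 := walk_parity p
  rw [Walk.length_edges, Nat.odd_iff] at h1
  rw [Nat.odd_iff]
  omega

end OddPathAux

/-- In the odd path P_{2n+1}, a pair of distinct vertices is maximally
matchable iff the sum of their indices is odd; consequently the edges of the group
inverse graph are exactly those pairs. -/
theorem odd_path_maxMatchable (n : ℕ) (i j : Fin (2 * n + 1)) (hij : i ≠ j) :
    (MaxMatchable (SimpleGraph.pathGraph (2 * n + 1)) i j ↔ Odd (i.val + j.val)) ∧
    ((SimpleGraph.fromRel (MaxMatchable (SimpleGraph.pathGraph (2 * n + 1)))).Adj i j ↔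
      Odd (i.val + j.val)) := by
  have key : ∀ a b : Fin (2 * n + 1), a ≠ b →
      (MaxMatchable (SimpleGraph.pathGraph (2 * n + 1)) a b ↔ Odd (a.val + b.val)) :=
    fun a b hab => ⟨OddPathAux.odd_of_maxMatchable a b, OddPathAux.maxMatchable_of_odd a b hab⟩
  refine ⟨key i j hij, ?_⟩
  rw [SimpleGraph.fromRel_adj]
  constructor
  · rintro ⟨_, h | h⟩
    · exact (key i j hij).mp h
    · have := (key j i (Ne.symm hij)).mp h
      rwa [Nat.add_comm] at this
  · intro h
    exact ⟨hij, Or.inl ((key i j hij).mpr h)⟩
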